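/- Let Q ∈ ℝ^{K×K} be symmetric, λ > 0, δ > 1, and suppose x̄⁺ ∈ ℝ^{K} satisfies x̄⁺ > 0, e^T x̄⁺ ≤ (δ+1)/2, and the second-order condition that (I − (1/K)ee^T)(Q − (λ/4) Diag(x̄⁺)^{−3/2})(I − (1/K)ee^T) is positive semidefinite. Then (K − 1) K^{3/2} ≤ ((δ+1)/2)^{3/2} · (4/λ) [tr(Q) − (1/K) e^T Q e]. -/

import Mathlib

/-!
Taking the trace of the positive semidefinite matrix P (Q - (λ/4) D) P, where P is the
(idempotent) centering projection and D = Diag(x^{-3/2}), gives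
(λ/4)(1 - 1/K) ∑ x_i^{-3/2} ≤ tr Q - (1/K) eᵀQe. Jensen's inequality for the convex function
t ↦ t^{-3/2} gives ∑ x_i^{-3/2} ≥ K^{5/2} / (∑ x_i)^{3/2}, and ∑ x_i ≤ (δ+1)/2.
-/

open Matrix Set Finset Real

lemma convexOn_rpow_neg {p : ℝ} (hp : 0 ≤ p) : ConvexOn ℝ (Ioi 0) fun x : ℝ ↦ x ^ (-p) := by
  -- `x ^ (-p) = exp (-p * log x)`: an antitone convex function of the concave `log`.
  have himage : log '' Ioi 0 = univ :=
    eq_univ_of_forall fun y ↦ ⟨exp y, exp_pos y, log_exp y⟩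
  have hexp : ConvexOn ℝ univ fun y ↦ exp (-p * y) :=
    convexOn_exp.comp_linearMap (LinearMap.mul ℝ ℝ (-p))
  have hanti : AntitoneOn (fun y ↦ exp (-p * y)) univ := fun a _ b _ hab ↦
    exp_le_exp.2 (by nlinarith)
  rw [← himage] at hexp hanti
  refine (hexp.comp_concaveOn strictConcaveOn_log_Ioi.concaveOn hanti).congr fun x hx ↦ ?_
  simp [rpow_def_of_pos (mem_Ioi.1 hx), mul_comm]

lemma card_rpow_add_one_le_sum_rpow_mul_sum_rpow_neg {ι : Type*} [Fintype ι] [Nonempty ι]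
    {p : ℝ} (hp : 0 ≤ p) {x : ι → ℝ} (hx : ∀ i, 0 < x i) :
    (Fintype.card ι : ℝ) ^ (p + 1) ≤ (∑ i, x i) ^ p * ∑ i, x i ^ (-p) := by
  set n : ℝ := (Fintype.card ι : ℝ)
  set S := ∑ i, x i
  have hn : 0 < n := by positivity
  have hS : 0 < S := sum_pos (fun i _ ↦ hx i) univ_nonempty
  have hjensen : (S / n) ^ (-p) ≤ n⁻¹ * ∑ i, x i ^ (-p) := by
    have := (convexOn_rpow_neg hp).map_sum_le (t := univ) (w := fun _ ↦ n⁻¹) (p := x)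
      (fun _ _ ↦ by positivity) (by simp [n]) (fun i _ ↦ hx i)
    simpa [smul_eq_mul, ← Finset.mul_sum, div_eq_inv_mul] using this
  calc n ^ (p + 1) = S ^ p * (n * (S / n) ^ (-p)) := by
        rw [rpow_neg (by positivity), div_rpow hS.le hn.le, rpow_add_one hn.ne']
        field_simp
    _ ≤ S ^ p * (n * (n⁻¹ * ∑ i, x i ^ (-p))) := by gcongr
    _ = S ^ p * ∑ i, x i ^ (-p) := by field_simp

namespace Matrix

variable {n R : Type*} [Fintype n] [DecidableEq n] [Field R]

variable (n R) in
def centeringMatrix : Matrix n n R := 1 - (Fintype.card n : R)⁻¹ • of fun _ _ ↦ 1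

lemma centeringMatrix_mul_self [CharZero R] [Nonempty n] :
    centeringMatrix n R * centeringMatrix n R = centeringMatrix n R := by
  have hJ : (of fun _ _ ↦ (1 : R) : Matrix n n R) * of (fun _ _ ↦ 1) =
      (Fintype.card n : R) • of fun _ _ ↦ 1 := by
    ext i j; simp [mul_apply]
  have hn : (Fintype.card n : R) ≠ 0 := by simp
  simp only [centeringMatrix, sub_mul, mul_sub, one_mul, mul_one, Matrix.smul_mul,
    Matrix.mul_smul, hJ, smul_smul, inv_mul_cancel₀ hn]
  abel

lemma trace_centeringMatrix_mul (M : Matrix n n R) :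
    (centeringMatrix n R * M).trace =
      M.trace - (Fintype.card n : R)⁻¹ * ((fun _ ↦ 1) ⬝ᵥ M *ᵥ fun _ ↦ 1) := by
  simp only [trace, centeringMatrix, smul_of, sub_mul, one_mul, diag_apply, sub_apply, mul_apply,
    of_apply, Pi.smul_apply, smul_eq_mul, mul_one, sum_sub_distrib, dotProduct, mulVec, mul_sum,
    sub_right_inj]
  exact sum_comm

lemma trace_centeringMatrix_mul_diagonal (d : n → R) :
    (centeringMatrix n R * diagonal d).trace = (1 - (Fintype.card n : R)⁻¹) * ∑ i, d i := by
  simp [trace_centeringMatrix_mul, dotProduct, mulVec, diagonal_apply, sub_mul]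

lemma trace_centeringMatrix_mul_nonneg [CharZero R] [PartialOrder R] [StarRing R] [AddLeftMono R]
    [Nonempty n] {M : Matrix n n R}
    (hM : (centeringMatrix n R * M * centeringMatrix n R).PosSemidef) :
    0 ≤ (centeringMatrix n R * M).trace := by
  simpa [trace_mul_cycle, centeringMatrix_mul_self] using hM.trace_nonneg

end Matrix

theorem l1_ball_lp_sparsity_bound_general (K : ℕ) (hK : 0 < K)
    (Q : Matrix (Fin K) (Fin K) ℝ)
    (lam : ℝ) (hlam : 0 < lam) (delta : ℝ)
    (x : Fin K → ℝ) (hx : ∀ i, 0 < x i) (hsum : ∑ i, x i ≤ (delta + 1) / 2)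
    (P : Matrix (Fin K) (Fin K) ℝ)
    (hP : P = 1 - (K : ℝ)⁻¹ • Matrix.of (fun _ _ => 1))
    (hsoc : (P * (Q - (lam / 4) • Matrix.diagonal (fun i => (x i) ^ (-(3 : ℝ) / 2))) * P).PosSemidef)
    (e : Fin K → ℝ) (he : e = fun _ => 1) :
    ((K : ℝ) - 1) * (K : ℝ) ^ ((3 : ℝ) / 2)
      ≤ ((delta + 1) / 2) ^ ((3 : ℝ) / 2) * ((4 / lam) * (Q.trace - (K : ℝ)⁻¹ * (e ⬝ᵥ Q *ᵥ e))) := by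
  have : Nonempty (Fin K) := Fin.pos_iff_nonempty.mp hK
  have hPC : P = centeringMatrix (Fin K) ℝ := by rw [hP, centeringMatrix, Fintype.card_fin]
  subst hPC he
  set T := ∑ i, x i ^ (-(3 : ℝ) / 2)
  set S := ∑ i, x i
  have hcentered : lam / 4 * ((1 - (K : ℝ)⁻¹) * T) ≤
      Q.trace - (K : ℝ)⁻¹ * ((fun _ ↦ 1) ⬝ᵥ Q *ᵥ fun _ ↦ 1) := by
    have := trace_centeringMatrix_mul_nonneg hsoc
    rw [Matrix.mul_sub, trace_sub, Matrix.mul_smul, trace_smul, trace_centeringMatrix_mul,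
      trace_centeringMatrix_mul_diagonal, Fintype.card_fin] at this
    simpa [smul_eq_mul, sub_nonneg] using this
  have hpower : (K : ℝ) ^ ((5 : ℝ) / 2) ≤ S ^ ((3 : ℝ) / 2) * T := by
    have := card_rpow_add_one_le_sum_rpow_mul_sum_rpow_neg (p := 3 / 2) (by norm_num) hx
    rwa [Fintype.card_fin, show (3 : ℝ) / 2 + 1 = 5 / 2 by norm_num, ← neg_div] at this
  have hSpos : 0 < S := sum_pos (fun i _ ↦ hx i) univ_nonempty
  have hS : S ^ ((3 : ℝ) / 2) ≤ ((delta + 1) / 2) ^ ((3 : ℝ) / 2) :=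
    rpow_le_rpow hSpos.le hsum (by norm_num)
  have hK1 : 0 ≤ 1 - (K : ℝ)⁻¹ := sub_nonneg.2 (inv_le_one_of_one_le₀ (by exact_mod_cast hK))
  have hT : 0 ≤ T := sum_nonneg fun i _ ↦ (rpow_pos_of_pos (hx i) _).le
  have hbound : 0 ≤ ((delta + 1) / 2) ^ ((3 : ℝ) / 2) := rpow_nonneg (hSpos.le.trans hsum) _
  calc ((K : ℝ) - 1) * (K : ℝ) ^ ((3 : ℝ) / 2) = (1 - (K : ℝ)⁻¹) * (K : ℝ) ^ ((5 : ℝ) / 2) := by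
        rw [show (5 : ℝ) / 2 = 3 / 2 + 1 by norm_num, rpow_add_one (by positivity)]
        field_simp
    _ ≤ (1 - (K : ℝ)⁻¹) * (((delta + 1) / 2) ^ ((3 : ℝ) / 2) * T) := by
        gcongr
        exact hpower.trans (mul_le_mul_of_nonneg_right hS hT)
    _ = ((delta + 1) / 2) ^ ((3 : ℝ) / 2) * ((4 / lam) * (lam / 4 * ((1 - (K : ℝ)⁻¹) * T))) := by
        field_simp
    _ ≤ _ := by gcongr

theorem l1_ball_lp_sparsity_bound (K : ℕ) (hK : 0 < K)
    (Q : Matrix (Fin K) (Fin K) ℝ) (hQsymm : Q.IsSymm)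
    (lam : ℝ) (hlam : 0 < lam) (delta : ℝ) (hdelta : 1 < delta)
    (x : Fin K → ℝ) (hx : ∀ i, 0 < x i) (hsum : ∑ i, x i ≤ (delta + 1) / 2)
    (P : Matrix (Fin K) (Fin K) ℝ)
    (hP : P = 1 - (K : ℝ)⁻¹ • Matrix.of (fun _ _ => 1))
    (hsoc : (P * (Q - (lam / 4) • Matrix.diagonal (fun i => (x i) ^ (-(3 : ℝ) / 2))) * P).PosSemidef)
    (e : Fin K → ℝ) (he : e = fun _ => 1) :
    ((K : ℝ) - 1) * (K : ℝ) ^ ((3 : ℝ) / 2)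
      ≤ ((delta + 1) / 2) ^ ((3 : ℝ) / 2) * ((4 / lam) * (Q.trace - (K : ℝ)⁻¹ * (e ⬝ᵥ Q *ᵥ e))) :=
  l1_ball_lp_sparsity_bound_general K hK Q lam hlam delta x hx hsum P hP hsoc e he
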